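/- Let f ∈ F[x1,x2,x3] be a 3-variate read-once polynomial. Then there exist i ∈ {1,2,3} and a ∈ F such that the restriction f|_{xi=a} has total degree at most 1. -/
import Mathlib

open MvPolynomial

/-- Substitute the constant `a` for variable `i`. -/
noncomputable def rst {F : Type*} [Field F] {n : ℕ} (i : Fin n) (a : F)
    (p : MvPolynomial (Fin n) F) : MvPolynomial (Fin n) F :=
  aeval (fun k : Fin n => if k = i then (C a : MvPolynomial (Fin n) F) else X k) p

/-- Partial derivative of a multilinear polynomial: p|_{xi=1} - p|_{xi=0}. -/
noncomputable def pder {F : Type*} [Field F] {n : ℕ} (i : Fin n)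
    (p : MvPolynomial (Fin n) F) : MvPolynomial (Fin n) F :=
  rst i 1 p - rst i 0 p

/-- Read-once polynomials. -/
inductive IsROP {F : Type*} [Field F] {n : ℕ} : MvPolynomial (Fin n) F → Prop
  | leaf (a b : F) (i : Fin n) : IsROP (C a * X i + C b)
  | add (a b : F) {f g : MvPolynomial (Fin n) F} (hdisj : Disjoint f.vars g.vars)
      (hf : IsROP f) (hg : IsROP g) : IsROP (C a * (f + g) + C b)
  | mul (a b : F) {f g : MvPolynomial (Fin n) F} (hdisj : Disjoint f.vars g.vars)
      (hf : IsROP f) (hg : IsROP g) : IsROP (C a * (f * g) + C b)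

section Helpers
variable {F : Type*} [Field F] {n : ℕ}

lemma vars_add_C (p : MvPolynomial (Fin n) F) (b : F) : (p + C b).vars = p.vars := by
  rw [vars_add_of_disjoint (by simp [vars_C]), vars_C, Finset.union_empty]

lemma vars_affine {c : F} (hc : c ≠ 0) (d : F) (j : Fin n) :
    (C c * X j + C d : MvPolynomial (Fin n) F).vars = {j} := by
  rw [vars_add_C, vars_C_mul _ hc, vars_X]

lemma td_wrap {p : MvPolynomial (Fin n) F} {k : ℕ} (h : p.totalDegree ≤ k) (a b : F) :
    (C a * p + C b).totalDegree ≤ k := by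
  refine (totalDegree_add _ _).trans (max_le ?_ (by simp [totalDegree_C]))
  refine (totalDegree_mul _ _).trans ?_
  simpa [totalDegree_C] using h

lemma td_affine (c d : F) (j : Fin n) :
    (C c * X j + C d : MvPolynomial (Fin n) F).totalDegree ≤ 1 :=
  td_wrap (by simp [totalDegree_X]) c d

end Helpers


lemma vars_subset_mul_affine {F : Type*} [Field F] {n : ℕ} {f : MvPolynomial (Fin n) F}
    {c : F} (hc : c ≠ 0) (d : F) {j : Fin n} (hj : j ∉ f.vars) :
    f.vars ⊆ (f * (C c * X j + C d)).vars := by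
  intro i hi
  obtain ⟨m, hmsup, him⟩ := (mem_vars i).mp hi
  set m' : Fin n →₀ ℕ := m + Finsupp.single j 1 with hm'
  have hfm' : coeff m' f = 0 := by
    by_contra h
    apply hj
    exact (mem_vars j).mpr ⟨m', mem_support_iff.mpr h, by
      simp [hm', Finsupp.mem_support_iff]⟩
  have hexp : f * (C c * X j + C d) = C c * (f * X j) + C d * f := by ring
  have hco : coeff m' (f * (C c * X j + C d)) = c * coeff m f := by
    rw [hexp, coeff_add, coeff_C_mul, coeff_C_mul, coeff_mul_X, hfm', mul_zero, add_zero]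
  refine (mem_vars i).mpr ⟨m', mem_support_iff.mpr ?_, ?_⟩
  · rw [hco]
    exact mul_ne_zero hc (mem_support_iff.mp hmsup)
  · rw [Finsupp.mem_support_iff] at him ⊢
    simp only [hm', Finsupp.add_apply]
    omega

section Aux
variable {F : Type*} [Field F]

lemma rop_aux {f : MvPolynomial (Fin 3) F} (hf : IsROP f) :
    (∃ (c d : F) (j : Fin 3), f = C c * X j + C d) ∨ 2 ≤ f.vars.card := by
  induction hf with
  | leaf a b i => exact Or.inl ⟨a, b, i, rfl⟩
  | add a b hdisj hf hg IHf IHg =>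
    rename_i f g
    by_cases ha : a = 0
    · exact Or.inl ⟨0, b, 0, by simp [ha]⟩
    · have hv : (C a * (f + g) + C b).vars = f.vars ∪ g.vars := by
        rw [vars_add_C, vars_C_mul _ ha, vars_add_of_disjoint hdisj]
      rcases IHf with ⟨c1, d1, j1, rfl⟩ | hb1
      · rcases IHg with ⟨c2, d2, j2, rfl⟩ | hb2
        · by_cases hc1 : c1 = 0
          · subst hc1
            exact Or.inl ⟨a * c2, a * (d1 + d2) + b, j2, by
              simp only [map_mul, map_add, map_zero]; ring⟩
          · by_cases hc2 : c2 = 0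
            · subst hc2
              exact Or.inl ⟨a * c1, a * (d1 + d2) + b, j1, by
                simp only [map_mul, map_add, map_zero]; ring⟩
            · right
              have hne : j1 ≠ j2 := by
                rw [vars_affine hc1, vars_affine hc2, Finset.disjoint_singleton] at hdisj
                exact hdisj
              rw [hv, vars_affine hc1, vars_affine hc2,
                Finset.card_union_of_disjoint (Finset.disjoint_singleton.mpr hne)]
              simp
        · right
          rw [hv]
          exact hb2.trans (Finset.card_le_card Finset.subset_union_right)
      · right
        rw [hv]
        exact hb1.trans (Finset.card_le_card Finset.subset_union_left)
  | mul a b hdisj hf hg IHf IHg =>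
    rename_i f g
    by_cases ha : a = 0
    · exact Or.inl ⟨0, b, 0, by simp [ha]⟩
    · rcases IHf with ⟨c1, d1, j1, rfl⟩ | hb1
      · rcases IHg with ⟨c2, d2, j2, rfl⟩ | hb2
        · by_cases hc1 : c1 = 0
          · subst hc1
            exact Or.inl ⟨a * d1 * c2, a * d1 * d2 + b, j2, by
              simp only [map_mul, map_add, map_zero]; ring⟩
          · by_cases hc2 : c2 = 0
            · subst hc2
              exact Or.inl ⟨a * c1 * d2, a * d1 * d2 + b, j1, by
                simp only [map_mul, map_add, map_zero]; ring⟩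
            · right
              have hne : j1 ≠ j2 := by
                rw [vars_affine hc1, vars_affine hc2, Finset.disjoint_singleton] at hdisj
                exact hdisj
              set m : Fin 3 →₀ ℕ := Finsupp.single j1 1 + Finsupp.single j2 1 with hm
              have hmne1 : Finsupp.single j1 1 ≠ m := by
                intro h
                have := congrArg (fun t => t j2) h
                simp [hm, Finsupp.single_apply, hne.symm] at this
              have hmne2 : Finsupp.single j2 1 ≠ m := by
                intro h
                have := congrArg (fun t => t j1) h
                simp [hm, Finsupp.single_apply, hne] at this
              have hmne0 : m ≠ 0 := by
                intro h
                have := congrArg (fun t => t j1) h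
                simp [hm, Finsupp.single_apply, hne] at this
              have hXX : (X j1 * X j2 : MvPolynomial (Fin 3) F) = monomial m 1 := by
                rw [X, X, monomial_mul, mul_one]
              have hexp : C a * ((C c1 * X j1 + C d1) * (C c2 * X j2 + C d2)) + C b
                  = C (a * (c1 * c2)) * (X j1 * X j2) + (C (a * (c1 * d2)) * X j1
                    + (C (a * (d1 * c2)) * X j2 + C (a * (d1 * d2) + b))) := by
                simp only [map_mul, map_add]; ring
              have h1 : coeff m (C (a * (c1 * c2)) * (X j1 * X j2)) = a * (c1 * c2) := by
                rw [hXX, coeff_C_mul, coeff_monomial, if_pos rfl, mul_one]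
              have h2 : coeff m (C (a * (c1 * d2)) * X j1) = 0 := by
                rw [coeff_C_mul, coeff_X', if_neg hmne1, mul_zero]
              have h3 : coeff m (C (a * (d1 * c2)) * X j2) = 0 := by
                rw [coeff_C_mul, coeff_X', if_neg hmne2, mul_zero]
              have h4 : coeff m (C (a * (d1 * d2) + b) : MvPolynomial (Fin 3) F) = 0 := by
                rw [coeff_C, if_neg (Ne.symm hmne0)]
              have hcoeff : coeff m (C a * ((C c1 * X j1 + C d1) * (C c2 * X j2 + C d2)) + C b)
                  = a * (c1 * c2) := by
                rw [hexp, coeff_add, coeff_add, coeff_add, h1, h2, h3, h4]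
                ring
              have hmem : m ∈ (C a * ((C c1 * X j1 + C d1) * (C c2 * X j2 + C d2)) + C b).support := by
                rw [mem_support_iff, hcoeff]
                exact mul_ne_zero ha (mul_ne_zero hc1 hc2)
              have hsub : ({j1, j2} : Finset (Fin 3)) ⊆
                  (C a * ((C c1 * X j1 + C d1) * (C c2 * X j2 + C d2)) + C b).vars := by
                intro x hx
                rw [mem_vars]
                refine ⟨m, hmem, ?_⟩
                simp only [Finset.mem_insert, Finset.mem_singleton] at hx
                rcases hx with rfl | rfl <;>
                  simp [hm, Finsupp.mem_support_iff, Finsupp.single_apply, hne, hne.symm]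
              calc 2 = ({j1, j2} : Finset (Fin 3)).card := by
                    rw [Finset.card_insert_of_notMem (by simp [hne]), Finset.card_singleton]
                _ ≤ _ := Finset.card_le_card hsub
        · -- f affine, g big
          by_cases hc1 : c1 = 0
          · subst hc1
            by_cases hd1 : d1 = 0
            · subst hd1
              exact Or.inl ⟨0, b, 0, by simp⟩
            · right
              have heq : C a * ((C 0 * X j1 + C d1) * g) + C b
                  = C (a * d1) * g + C b := by
                simp only [map_mul, map_zero]; ring
              rw [heq, vars_add_C, vars_C_mul _ (mul_ne_zero ha hd1)]
              exact hb2
          · right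
            have hj1 : j1 ∉ g.vars := by
              rw [vars_affine hc1] at hdisj
              exact Finset.disjoint_left.mp hdisj (Finset.mem_singleton_self j1)
            have hsub : g.vars ⊆ (g * (C c1 * X j1 + C d1)).vars :=
              vars_subset_mul_affine hc1 d1 hj1
            have heq : C a * ((C c1 * X j1 + C d1) * g) + C b
                = C a * (g * (C c1 * X j1 + C d1)) + C b := by ring
            rw [heq, vars_add_C, vars_C_mul _ ha]
            exact hb2.trans (Finset.card_le_card hsub)
      · rcases IHg with ⟨c2, d2, j2, rfl⟩ | hb2
        · -- f big, g affine
          by_cases hc2 : c2 = 0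
          · subst hc2
            by_cases hd2 : d2 = 0
            · subst hd2
              exact Or.inl ⟨0, b, 0, by simp⟩
            · right
              have heq : C a * (f * (C 0 * X j2 + C d2)) + C b
                  = C (a * d2) * f + C b := by
                simp only [map_mul, map_zero]; ring
              rw [heq, vars_add_C, vars_C_mul _ (mul_ne_zero ha hd2)]
              exact hb1
          · right
            have hj2 : j2 ∉ f.vars := by
              rw [vars_affine hc2] at hdisj
              exact Finset.disjoint_right.mp hdisj (Finset.mem_singleton_self j2)
            have hsub : f.vars ⊆ (f * (C c2 * X j2 + C d2)).vars :=
              vars_subset_mul_affine hc2 d2 hj2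
            rw [vars_add_C, vars_C_mul _ ha]
            exact hb1.trans (Finset.card_le_card hsub)
        · -- both big: impossible
          exfalso
          have h1 := Finset.card_le_univ (f.vars ∪ g.vars)
          rw [Finset.card_union_of_disjoint hdisj] at h1
          simp only [Finset.card_univ, Fintype.card_fin] at h1
          omega
end Aux


section Main
variable {F : Type*} [Field F] {n : ℕ}

@[simp] lemma rst_C (i : Fin n) (x c : F) : rst i x (C c) = (C c : MvPolynomial (Fin n) F) := by
  simp [rst]

@[simp] lemma rst_X (i : Fin n) (x : F) (j : Fin n) :
    rst i x (X j) = if j = i then (C x : MvPolynomial (Fin n) F) else X j := by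
  simp [rst]

@[simp] lemma rst_add (i : Fin n) (x : F) (p q : MvPolynomial (Fin n) F) :
    rst i x (p + q) = rst i x p + rst i x q := map_add _ _ _

@[simp] lemma rst_mul (i : Fin n) (x : F) (p q : MvPolynomial (Fin n) F) :
    rst i x (p * q) = rst i x p * rst i x q := map_mul _ _ _

lemma td_ite (c d x : F) (j i : Fin n) :
    (C c * (if j = i then (C x : MvPolynomial (Fin n) F) else X j) + C d).totalDegree ≤ 1 := by
  split_ifs
  · rw [← C_mul, ← C_add, totalDegree_C]
    exact Nat.zero_le 1
  · exact td_affine c d j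

end Main

theorem stmt12 {F : Type*} [Field F] (f : MvPolynomial (Fin 3) F)
    (hf : IsROP f) :
    ∃ (i : Fin 3) (a : F), (rst i a f).totalDegree ≤ 1 := by
  induction hf with
  | leaf a b i =>
    refine ⟨i, 0, ?_⟩
    simp only [rst_add, rst_mul, rst_C, rst_X, if_pos]
    rw [← C_mul, ← C_add, totalDegree_C]
    exact Nat.zero_le 1
  | add a b hdisj hf hg IHf IHg =>
    rename_i f g
    rcases rop_aux hf with ⟨c1, d1, j1, rfl⟩ | hb1
    · obtain ⟨i, x, hix⟩ := IHg
      refine ⟨i, x, ?_⟩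
      simp only [rst_add, rst_mul, rst_C, rst_X]
      exact td_wrap ((totalDegree_add _ _).trans (max_le (td_ite c1 d1 x j1 i) hix)) a b
    · rcases rop_aux hg with ⟨c2, d2, j2, rfl⟩ | hb2
      · obtain ⟨i, x, hix⟩ := IHf
        refine ⟨i, x, ?_⟩
        simp only [rst_add, rst_mul, rst_C, rst_X]
        exact td_wrap ((totalDegree_add _ _).trans (max_le hix (td_ite c2 d2 x j2 i))) a b
      · exfalso
        have h1 := Finset.card_le_univ (f.vars ∪ g.vars)
        rw [Finset.card_union_of_disjoint hdisj] at h1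
        simp only [Finset.card_univ, Fintype.card_fin] at h1
        omega
  | mul a b hdisj hf hg IHf IHg =>
    rename_i f g
    rcases rop_aux hg with ⟨c2, d2, j2, rfl⟩ | hb2
    · by_cases hc2 : c2 = 0
      · subst hc2
        obtain ⟨i, x, hix⟩ := IHf
        refine ⟨i, x, ?_⟩
        simp only [rst_add, rst_mul, rst_C, rst_X, map_zero, zero_mul, zero_add]
        refine td_wrap ?_ a b
        refine (totalDegree_mul _ _).trans ?_
        rw [totalDegree_C, Nat.add_zero]
        exact hix
      · refine ⟨j2, -d2 / c2, ?_⟩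
        simp only [rst_add, rst_mul, rst_C, rst_X, if_pos]
        have h0 : (C c2 * C (-d2 / c2) + C d2 : MvPolynomial (Fin 3) F) = 0 := by
          rw [← C_mul, ← C_add, ← C_0]
          congr 1
          field_simp
          ring
        rw [h0, mul_zero, mul_zero, zero_add, totalDegree_C]
        exact Nat.zero_le 1
    · rcases rop_aux hf with ⟨c1, d1, j1, rfl⟩ | hb1
      · by_cases hc1 : c1 = 0
        · subst hc1
          obtain ⟨i, x, hix⟩ := IHg
          refine ⟨i, x, ?_⟩
          simp only [rst_add, rst_mul, rst_C, rst_X, map_zero, zero_mul, zero_add]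
          refine td_wrap ?_ a b
          refine (totalDegree_mul _ _).trans ?_
          rw [totalDegree_C, Nat.zero_add]
          exact hix
        · refine ⟨j1, -d1 / c1, ?_⟩
          simp only [rst_add, rst_mul, rst_C, rst_X, if_pos]
          have h0 : (C c1 * C (-d1 / c1) + C d1 : MvPolynomial (Fin 3) F) = 0 := by
            rw [← C_mul, ← C_add, ← C_0]
            congr 1
            field_simp
            ring
          rw [h0, zero_mul, mul_zero, zero_add, totalDegree_C]
          exact Nat.zero_le 1
      · exfalso
        have h1 := Finset.card_le_univ (f.vars ∪ g.vars)
        rw [Finset.card_union_of_disjoint hdisj] at h1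
        simp only [Finset.card_univ, Fintype.card_fin] at h1
        omega
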